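/- Let γ > 0, ρ > 0 and c > 0. There is no function θ : ℝ → ℝ that is twice differentiable on [0, ∞) and satisfies both θ(t) ≥ ρ for all t ≥ 0 and θ(t)·θ''(t) − (1+γ)·(θ'(t))² ≥ c for all t ≥ 0. -/

import Mathlib

open Set


/-- ODE core of the blow-up proof: no globally defined twice differentiable function
on `[0, ∞)` can satisfy both `θ ≥ ρ > 0` and `θ θ'' - (1+γ)(θ')² ≥ c > 0`. -/
theorem stmt_4 (γ ρ c : ℝ) (hγ : 0 < γ) (hρ : 0 < ρ) (hc : 0 < c) :
    ¬ ∃ θ : ℝ → ℝ,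
      DifferentiableOn ℝ θ (Set.Ici 0) ∧
      DifferentiableOn ℝ (derivWithin θ (Set.Ici 0)) (Set.Ici 0) ∧
      (∀ t ∈ Set.Ici (0 : ℝ), ρ ≤ θ t) ∧
      (∀ t ∈ Set.Ici (0 : ℝ),
        c ≤ θ t * derivWithin (derivWithin θ (Set.Ici 0)) (Set.Ici 0) t -
          (1 + γ) * (derivWithin θ (Set.Ici 0) t) ^ 2) := by
  rintro ⟨θ, hd1, hd2, hlow, hineq⟩
  set B := derivWithin θ (Set.Ici 0) with hB
  set C := derivWithin B (Set.Ici 0) with hC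
  have hθpos : ∀ t ∈ Set.Ici (0:ℝ), 0 < θ t := fun t ht => lt_of_lt_of_le hρ (hlow t ht)
  have hmem : ∀ x : ℝ, 0 < x → Set.Ici (0:ℝ) ∈ nhds x := fun x hx => Ici_mem_nhds hx
  have hBd : ∀ x : ℝ, 0 < x → DifferentiableAt ℝ θ x := fun x hx =>
    (hd1 x (le_of_lt hx)).differentiableAt (hmem x hx)
  have hB'd : ∀ x : ℝ, 0 < x → DifferentiableAt ℝ B x := fun x hx =>
    (hd2 x (le_of_lt hx)).differentiableAt (hmem x hx)
  have hderivθ : ∀ x : ℝ, 0 < x → deriv θ x = B x := fun x hx =>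
    (derivWithin_of_mem_nhds (hmem x hx)).symm
  have hderivB : ∀ x : ℝ, 0 < x → deriv B x = C x := fun x hx =>
    (derivWithin_of_mem_nhds (hmem x hx)).symm
  have hCpos : ∀ t ∈ Set.Ici (0:ℝ), 0 < C t := by
    intro t ht
    have h1 := hineq t ht
    have h3 := hθpos t ht
    nlinarith [sq_nonneg (B t)]
  have hintIci : ∀ a : ℝ, interior (Set.Ici a) = Set.Ioi a := fun a => interior_Ici
  by_cases hcase : ∀ t ∈ Set.Ici (0:ℝ), B t ≤ 0
  · -- Case A : θ' ≤ 0 everywhere, so θ ≤ θ 0, so θ'' ≥ c/θ 0, so θ' → ∞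
    have hθanti : AntitoneOn θ (Set.Ici 0) := by
      apply antitoneOn_of_deriv_nonpos (convex_Ici 0) (hd1.continuousOn)
      · rw [hintIci]; exact fun x hx => (hBd x hx).differentiableWithinAt
      · rw [hintIci]; intro x hx
        rw [hderivθ x hx]; exact hcase x (Set.mem_Ici.mpr (le_of_lt (Set.mem_Ioi.mp hx)))
    have hθle : ∀ t ∈ Set.Ici (0:ℝ), θ t ≤ θ 0 :=
      fun t ht => hθanti Set.self_mem_Ici ht ht
    set k := c / θ 0 with hk
    have hθ0 : 0 < θ 0 := hθpos 0 Set.self_mem_Ici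
    have hkpos : 0 < k := div_pos hc hθ0
    have hmono : MonotoneOn (fun t => B t - k * t) (Set.Ici 0) := by
      apply monotoneOn_of_deriv_nonneg (convex_Ici 0)
      · exact (hd2.continuousOn.sub (continuous_const.mul continuous_id).continuousOn)
      · rw [hintIci]
        exact fun x hx => ((hB'd x hx).sub (by fun_prop : DifferentiableAt ℝ (fun t : ℝ => k * t) x)).differentiableWithinAt
      · rw [hintIci]; intro x hx
        have hdiff : DifferentiableAt ℝ (fun t : ℝ => k * t) x := by fun_prop
        rw [deriv_fun_sub (hB'd x hx) hdiff]
        have hdk : deriv (fun t : ℝ => k * t) x = k := by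
          rw [deriv_const_mul_field]; simp
        rw [hdk, hderivB x hx]
        have h1 := hineq x (Set.mem_Ici.mpr (le_of_lt (Set.mem_Ioi.mp hx)))
        have h2 := hθpos x (Set.mem_Ici.mpr (le_of_lt (Set.mem_Ioi.mp hx)))
        have h3 := hθle x (Set.mem_Ici.mpr (le_of_lt (Set.mem_Ioi.mp hx)))
        have h4 : c / θ 0 ≤ c / θ x := div_le_div_of_nonneg_left (le_of_lt hc) h2 h3
        have h5 : c / θ x ≤ C x := by
          rw [div_le_iff₀ h2]
          nlinarith [sq_nonneg (B x)]
        rw [hk]; linarith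
    -- evaluate at t = (1 - B 0)/k
    set T := (1 - B 0) / k with hT
    have hB0 : B 0 ≤ 0 := hcase 0 Set.self_mem_Ici
    have hT0 : (0:ℝ) ≤ T := div_nonneg (by linarith) (le_of_lt hkpos)
    have := hmono (self_mem_Ici) hT0 hT0
    simp only [mul_zero, sub_zero] at this
    have hkT : k * T = 1 - B 0 := by
      rw [hT, mul_div_cancel₀]; exact ne_of_gt hkpos
    have hBT : B T ≤ 0 := hcase T hT0
    linarith
  · -- Case B : B t0 > 0 for some t0
    push_neg at hcase
    obtain ⟨t0, ht0, hBt0⟩ := hcase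
    -- B is monotone on Ici 0
    have hBmono : MonotoneOn B (Set.Ici 0) := by
      apply monotoneOn_of_deriv_nonneg (convex_Ici 0) hd2.continuousOn
      · rw [hintIci]; exact fun x hx => (hB'd x hx).differentiableWithinAt
      · rw [hintIci]; intro x hx
        rw [hderivB x hx]; exact le_of_lt (hCpos x (Set.mem_Ici.mpr (le_of_lt (Set.mem_Ioi.mp hx))))
    have hBpos : ∀ t ∈ Set.Ici t0, 0 < B t := by
      intro t ht
      exact lt_of_lt_of_le hBt0 (hBmono ht0 (Set.mem_Ici.mpr (le_trans (Set.mem_Ici.mp ht0) (Set.mem_Ici.mp ht))) ht)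
    -- h := θ/B + γ t is antitone on Ici t0
    have hsub : Set.Ici t0 ⊆ Set.Ici (0:ℝ) := Ici_subset_Ici.mpr ht0
    have hanti : AntitoneOn (fun t => θ t / B t + γ * t) (Set.Ici t0) := by
      apply antitoneOn_of_deriv_nonpos (convex_Ici t0)
      · exact ((hd1.continuousOn.mono hsub).div (hd2.continuousOn.mono hsub)
          (fun t ht => ne_of_gt (hBpos t ht))).add
          (continuous_const.mul continuous_id).continuousOn
      · rw [hintIci]; intro x hx
        have hx0 : 0 < x := lt_of_le_of_lt ht0 hx
        exact (((hBd x hx0).div (hB'd x hx0)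
          (ne_of_gt (hBpos x (Set.mem_Ici.mpr (le_of_lt (Set.mem_Ioi.mp hx)))))).add (by fun_prop)).differentiableWithinAt
      · rw [hintIci]; intro x hx
        have hx0 : 0 < x := lt_of_le_of_lt ht0 hx
        have hBx : 0 < B x := hBpos x (Set.mem_Ici.mpr (le_of_lt (Set.mem_Ioi.mp hx)))
        have hdiv : DifferentiableAt ℝ (fun t => θ t / B t) x :=
          (hBd x hx0).div (hB'd x hx0) (ne_of_gt hBx)
        have hlin : DifferentiableAt ℝ (fun t : ℝ => γ * t) x := by fun_prop
        rw [deriv_fun_add hdiv hlin, deriv_fun_div (hBd x hx0) (hB'd x hx0) (ne_of_gt hBx),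
          hderivθ x hx0, hderivB x hx0]
        have hdg : deriv (fun t : ℝ => γ * t) x = γ := by
          rw [deriv_const_mul_field]; simp
        rw [hdg]
        have h1 := hineq x (le_of_lt hx0)
        have hden : 0 < (B x)^2 := pow_pos hBx 2
        have key : (B x * B x - θ x * C x) / (B x)^2 ≤ -γ := by
          rw [div_le_iff₀ hden]
          nlinarith
        linarith
    -- evaluate at T
    set T := t0 + (θ t0 / B t0 + 1) / γ with hTdef
    have hq : 0 < (θ t0 / B t0 + 1) / γ := by
      have : 0 < θ t0 / B t0 := div_pos (hθpos t0 ht0) hBt0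
      positivity
    have hTmem : T ∈ Set.Ici t0 := by simp [hTdef]; linarith
    have h := hanti Set.self_mem_Ici hTmem (by simp [hTdef]; linarith)
    have hγT : γ * T = γ * t0 + (θ t0 / B t0 + 1) := by
      rw [hTdef]; field_simp
    have hpos : 0 < θ T / B T :=
      div_pos (hθpos T (hsub hTmem)) (hBpos T hTmem)
    simp only at h
    linarith
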